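/- Union of limit sets: Let K be a valued field and X₁, X₂ ⊆ K^n × K^m with projections to K^n both equal to Z ⊆ K^n, and a ∈ K^n. If L₁ is a closed minimal limit set of X₁ at a and L₂ is a closed minimal limit set of X₂ at a (in the sense that every element of each Lᵢ is isolated in Lᵢ, each Lᵢ is closed in the valuation topology, and Lᵢ is a limit set of Xᵢ at a but no proper subset is), then L₁ ∪ L₂ is a closed minimal limit set of X₁ ∪ X₂ at a. -/

import Mathlib

/-- The open polyball around `c` of radius `ε` in `K^m`. -/
def polyball {K Γ : Type*} [Field K] [AddCommGroup Γ] [LinearOrder Γ] [IsOrderedAddMonoid Γ]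
    (v : K → WithTop Γ) {m : ℕ} (c : Fin m → K) (ε : Γ) : Set (Fin m → K) :=
  {y | ∀ j, (ε : WithTop Γ) < v (y j - c j)}

/-- The valuation topology on `K^m`, generated by the open polyballs. -/
def valTopology {K Γ : Type*} [Field K] [AddCommGroup Γ] [LinearOrder Γ] [IsOrderedAddMonoid Γ]
    (v : K → WithTop Γ) (m : ℕ) : TopologicalSpace (Fin m → K) :=
  TopologicalSpace.generateFrom {S | ∃ c ε, S = polyball v c ε}

/-- `L ⊆ K^m` is a limit set of `X ⊆ K^n × K^m` at `a ∈ K^n`. -/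
def IsLimitSet {K Γ : Type*} [Field K] [AddCommGroup Γ] [LinearOrder Γ] [IsOrderedAddMonoid Γ]
    (v : K → WithTop Γ) {n m : ℕ}
    (X : Set ((Fin n → K) × (Fin m → K))) (a : Fin n → K)
    (L : Set (Fin m → K)) : Prop :=
  ∀ ε : Γ, ∃ δ : Γ, ∀ c : Fin n → K,
    c ∈ polyball v a δ → c ≠ a → c ∈ Prod.fst '' X →
      ∃ L' ⊆ L, {b | (c, b) ∈ X} ⊆ ⋃ d ∈ L', polyball v d ε

/-!
Every point `b` of a minimal limit set `L` of `X` is adherent to every other limit set `L'`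
of `X`: minimality of `L` produces fibres with a point `x` that is close to no point of
`L ∖ {b}`, hence close to `b`; since `x` is also close to some `e ∈ L'`, the ultrametric
inequality puts `e` close to `b`. A closed set all of whose points are isolated meets a small
polyball around any point `b` in at most `b`, and so does a union of two such sets, hence so
does every `L' ⊆ L₁ ∪ L₂`. If `L'` is a limit set of `X₁ ∪ X₂`, it is one of `X₁` and of `X₂`,
so it contains every point of `L₁` and of `L₂`.
-/

open Topology

section Polyball

variable {K Γ : Type*} [Field K] [AddCommGroup Γ] [LinearOrder Γ] [IsOrderedAddMonoid Γ]
  (v : K → WithTop Γ) {m : ℕ}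

lemma polyball_subset_polyball {c : Fin m → K} {ε ε' : Γ} (h : ε ≤ ε') :
    polyball v c ε' ⊆ polyball v c ε := fun _ hy j =>
  (WithTop.coe_le_coe.mpr h).trans_lt (hy j)

lemma mem_polyball_comm (hneg : ∀ x : K, v (-x) = v x) {x c : Fin m → K} {ε : Γ} :
    x ∈ polyball v c ε ↔ c ∈ polyball v x ε := by
  constructor <;> intro h j <;> rw [← neg_sub, hneg] <;> exact h j

lemma polyball_subset_polyball_of_mem (hadd : ∀ x y : K, min (v x) (v y) ≤ v (x + y))
    {c x : Fin m → K} {ε : Γ} (hx : x ∈ polyball v c ε) :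
    polyball v x ε ⊆ polyball v c ε := fun y hy j =>
  calc (ε : WithTop Γ) < min (v (y j - x j)) (v (x j - c j)) := lt_min (hy j) (hx j)
    _ ≤ v (y j - c j) := by simpa using hadd (y j - x j) (x j - c j)

lemma exists_polyball_subset_of_isOpen (hadd : ∀ x y : K, min (v x) (v y) ≤ v (x + y))
    {U : Set (Fin m → K)} (hU : IsOpen[valTopology v m] U) {b : Fin m → K} (hb : b ∈ U) :
    ∃ ρ : Γ, polyball v b ρ ⊆ U := by
  induction hU generalizing b with
  | basic S hS =>
    obtain ⟨c, ε, rfl⟩ := hS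
    exact ⟨ε, polyball_subset_polyball_of_mem v hadd hb⟩
  | univ => exact ⟨0, Set.subset_univ _⟩
  | inter U V _ _ ihU ihV =>
    obtain ⟨ρ₁, h₁⟩ := ihU hb.1
    obtain ⟨ρ₂, h₂⟩ := ihV hb.2
    exact ⟨max ρ₁ ρ₂, Set.subset_inter
      ((polyball_subset_polyball v (le_max_left _ _)).trans h₁)
      ((polyball_subset_polyball v (le_max_right _ _)).trans h₂)⟩
  | sUnion S _ ih =>
    obtain ⟨U, hUS, hbU⟩ := hb
    obtain ⟨ρ, h⟩ := ih U hUS hbU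
    exact ⟨ρ, h.trans (Set.subset_sUnion_of_mem hUS)⟩

lemma exists_polyball_inter_subset_singleton (hadd : ∀ x y : K, min (v x) (v y) ≤ v (x + y))
    {L : Set (Fin m → K)} (hclosed : IsClosed[valTopology v m] L)
    (hiso : ∀ b ∈ L, ∃ ε : Γ, ∀ y ∈ L, y ∈ polyball v b ε → y = b) (b : Fin m → K) :
    ∃ ρ : Γ, L ∩ polyball v b ρ ⊆ {b} := by
  by_cases hb : b ∈ L
  · obtain ⟨ε, hε⟩ := hiso b hb
    exact ⟨ε, fun y hy => hε y hy.1 hy.2⟩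
  · obtain ⟨ρ, hρ⟩ := exists_polyball_subset_of_isOpen v hadd hclosed.isOpen_compl hb
    exact ⟨ρ, fun y hy => absurd hy.1 (hρ hy.2)⟩

lemma exists_polyball_union_inter_subset_singleton {L₁ L₂ : Set (Fin m → K)} {b : Fin m → K}
    (h₁ : ∃ ρ : Γ, L₁ ∩ polyball v b ρ ⊆ {b}) (h₂ : ∃ ρ : Γ, L₂ ∩ polyball v b ρ ⊆ {b}) :
    ∃ ρ : Γ, (L₁ ∪ L₂) ∩ polyball v b ρ ⊆ {b} := by
  obtain ⟨ρ₁, h₁⟩ := h₁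
  obtain ⟨ρ₂, h₂⟩ := h₂
  refine ⟨max ρ₁ ρ₂, ?_⟩
  rw [Set.union_inter_distrib_right]
  exact Set.union_subset
    ((Set.inter_subset_inter_right _ (polyball_subset_polyball v (le_max_left _ _))).trans h₁)
    ((Set.inter_subset_inter_right _ (polyball_subset_polyball v (le_max_right _ _))).trans h₂)

end Polyball

section LimitSet

variable {K Γ : Type*} [Field K] [AddCommGroup Γ] [LinearOrder Γ] [IsOrderedAddMonoid Γ]
  (v : K → WithTop Γ) {n m : ℕ} {X X₁ X₂ : Set ((Fin n → K) × (Fin m → K))} {a : Fin n → K}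
  {L L' L₁ L₂ : Set (Fin m → K)}

lemma isLimitSet_iff : IsLimitSet v X a L ↔ ∀ ε : Γ, ∃ δ : Γ, ∀ c ∈ polyball v a δ, c ≠ a →
    c ∈ Prod.fst '' X → {b | (c, b) ∈ X} ⊆ ⋃ d ∈ L, polyball v d ε := by
  refine forall_congr' fun ε => exists_congr fun δ => forall₄_congr fun c _ _ _ => ?_
  exact ⟨fun ⟨L', hL', hcov⟩ => hcov.trans (Set.biUnion_subset_biUnion_left hL'),
    fun hcov => ⟨L, subset_rfl, hcov⟩⟩

lemma IsLimitSet.of_subset (hX : X₁ ⊆ X₂) (hL : IsLimitSet v X₂ a L) : IsLimitSet v X₁ a L := by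
  intro ε
  obtain ⟨δ, hδ⟩ := hL ε
  refine ⟨δ, fun c hc hca hcX => ?_⟩
  obtain ⟨L', hL', hcov⟩ := hδ c hc hca (Set.image_mono hX hcX)
  exact ⟨L', hL', fun x hx => hcov (hX hx)⟩

lemma IsLimitSet.union (h₁ : IsLimitSet v X₁ a L₁) (h₂ : IsLimitSet v X₂ a L₂)
    (hX : Prod.fst '' X₁ = Prod.fst '' X₂) : IsLimitSet v (X₁ ∪ X₂) a (L₁ ∪ L₂) := by
  rw [isLimitSet_iff] at *
  intro ε
  obtain ⟨δ₁, hδ₁⟩ := h₁ ε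
  obtain ⟨δ₂, hδ₂⟩ := h₂ ε
  refine ⟨max δ₁ δ₂, fun c hc hca hcX => ?_⟩
  rw [Set.image_union, ← hX, Set.union_self] at hcX
  rintro y (hy | hy)
  · exact Set.biUnion_subset_biUnion_left Set.subset_union_left
      (hδ₁ c (polyball_subset_polyball v (le_max_left _ _) hc) hca hcX hy)
  · exact Set.biUnion_subset_biUnion_left Set.subset_union_right
      (hδ₂ c (polyball_subset_polyball v (le_max_right _ _) hc) hca (hX ▸ hcX) hy)

lemma IsLimitSet.exists_mem_polyball_of_minimal
    (hadd : ∀ x y : K, min (v x) (v y) ≤ v (x + y)) (hneg : ∀ x : K, v (-x) = v x)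
    (hL : IsLimitSet v X a L) (hmin : ∀ L'' ⊂ L, ¬ IsLimitSet v X a L'')
    {b : Fin m → K} (hb : b ∈ L) (hL' : IsLimitSet v X a L') (ρ : Γ) :
    ∃ e ∈ L', e ∈ polyball v b ρ := by
  have hnot := hmin _ (Set.sdiff_singleton_ssubset.mpr hb)
  simp only [isLimitSet_iff, not_forall, not_exists, Set.not_subset] at hnot
  obtain ⟨ε₀, hε₀⟩ := hnot
  rw [isLimitSet_iff] at hL hL'
  obtain ⟨δ, hδ⟩ := hL (max ε₀ ρ)
  obtain ⟨δ', hδ'⟩ := hL' (max ε₀ ρ)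
  obtain ⟨c, hc, hca, hcX, x, hx, hxnot⟩ := hε₀ (max δ δ')
  have hxb : x ∈ polyball v b (max ε₀ ρ) := by
    obtain ⟨d, hd, hxd⟩ := Set.mem_iUnion₂.mp
      (hδ c (polyball_subset_polyball v (le_max_left _ _) hc) hca hcX hx)
    obtain rfl | hdb := eq_or_ne d b
    · exact hxd
    · exact absurd (Set.mem_biUnion (show d ∈ L \ {b} from ⟨hd, hdb⟩)
        (polyball_subset_polyball v (le_max_left _ _) hxd)) hxnot
  obtain ⟨e, he, hxe⟩ := Set.mem_iUnion₂.mp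
    (hδ' c (polyball_subset_polyball v (le_max_right _ _) hc) hca hcX hx)
  exact ⟨e, he, polyball_subset_polyball v (le_max_right _ _)
    (polyball_subset_polyball_of_mem v hadd hxb ((mem_polyball_comm v hneg).mp hxe))⟩

lemma IsLimitSet.mem_of_minimal
    (hadd : ∀ x y : K, min (v x) (v y) ≤ v (x + y)) (hneg : ∀ x : K, v (-x) = v x)
    (hL : IsLimitSet v X a L) (hmin : ∀ L'' ⊂ L, ¬ IsLimitSet v X a L'')
    {b : Fin m → K} (hb : b ∈ L) (hL' : IsLimitSet v X a L')
    (hloc : ∃ ρ : Γ, L' ∩ polyball v b ρ ⊆ {b}) : b ∈ L' := by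
  obtain ⟨ρ, hρ⟩ := hloc
  obtain ⟨e, he, heb⟩ := hL.exists_mem_polyball_of_minimal v hadd hneg hmin hb hL' ρ
  rwa [← hρ ⟨he, heb⟩]

end LimitSet

/-- the union of two closed minimal limit sets (all of whose
points are isolated) of `X₁` and `X₂` at `a` is a closed minimal limit set of
`X₁ ∪ X₂` at `a`, provided `X₁` and `X₂` have the same projection `Z`. -/
theorem union_of_minimal_limit_sets
    {K Γ : Type*} [Field K] [AddCommGroup Γ] [LinearOrder Γ] [IsOrderedAddMonoid Γ]
    (v : K → WithTop Γ)
    (hadd : ∀ x y : K, min (v x) (v y) ≤ v (x + y))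
    (hneg : ∀ x : K, v (-x) = v x)
    {n m : ℕ} (X₁ X₂ : Set ((Fin n → K) × (Fin m → K)))
    (Z : Set (Fin n → K)) (a : Fin n → K)
    (hZ₁ : Prod.fst '' X₁ = Z) (hZ₂ : Prod.fst '' X₂ = Z)
    (L₁ L₂ : Set (Fin m → K))
    (h₁closed : @IsClosed _ (valTopology v m) L₁)
    (h₂closed : @IsClosed _ (valTopology v m) L₂)
    (h₁iso : ∀ b ∈ L₁, ∃ ε : Γ, ∀ y ∈ L₁, y ∈ polyball v b ε → y = b)
    (h₂iso : ∀ b ∈ L₂, ∃ ε : Γ, ∀ y ∈ L₂, y ∈ polyball v b ε → y = b)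
    (h₁ : IsLimitSet v X₁ a L₁) (h₁min : ∀ L' ⊂ L₁, ¬ IsLimitSet v X₁ a L')
    (h₂ : IsLimitSet v X₂ a L₂) (h₂min : ∀ L' ⊂ L₂, ¬ IsLimitSet v X₂ a L') :
    IsLimitSet v (X₁ ∪ X₂) a (L₁ ∪ L₂)
      ∧ (∀ L' ⊂ L₁ ∪ L₂, ¬ IsLimitSet v (X₁ ∪ X₂) a L')
      ∧ @IsClosed _ (valTopology v m) (L₁ ∪ L₂) := by
  have hloc : ∀ b, ∃ ρ : Γ, (L₁ ∪ L₂) ∩ polyball v b ρ ⊆ {b} := fun b =>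
    exists_polyball_union_inter_subset_singleton v
      (exists_polyball_inter_subset_singleton v hadd h₁closed h₁iso b)
      (exists_polyball_inter_subset_singleton v hadd h₂closed h₂iso b)
  refine ⟨h₁.union v h₂ (hZ₁.trans hZ₂.symm), fun L' hL'ss hL' => hL'ss.not_subset ?_,
    by let _ := valTopology v m; exact h₁closed.union h₂closed⟩
  have hloc' : ∀ b, ∃ ρ : Γ, L' ∩ polyball v b ρ ⊆ {b} := fun b =>
    (hloc b).imp fun _ h => (Set.inter_subset_inter_left _ hL'ss.subset).trans h
  exact Set.union_subset
    (fun b hb => h₁.mem_of_minimal v hadd hneg h₁min hb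
      (hL'.of_subset v Set.subset_union_left) (hloc' b))
    (fun b hb => h₂.mem_of_minimal v hadd hneg h₂min hb
      (hL'.of_subset v Set.subset_union_right) (hloc' b))
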